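/- For real numbers l, σ, a, b with 0 < σ < b ≤ a and 0 < l ≤ b − σ, the spherocylinder intersection probability P(l,σ,a,b) equals (2/π)·((b−σ)/b)·(l/a) + (2/π)·((a−σ)/a)·(l/b) − (1/π)·l²/(ab) + (σ/a + σ/b − σ²/(ab)). -/

import Mathlib

open Real MeasureTheory Filter

/-- `A(l,a) = ∫_0^π min(a, l·|cos φ|) dφ` -/
noncomputable def A2 (l a : ℝ) : ℝ := ∫ φ in (0:ℝ)..π, min a (l * |Real.cos φ|)

/-- `B(l,b) = ∫_0^π min(b, l·sin φ) dφ` -/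
noncomputable def B2 (l b : ℝ) : ℝ := ∫ φ in (0:ℝ)..π, min b (l * Real.sin φ)

/-- `AB(l,a,b) = ∫_0^π min(a, l·|cos φ|)·min(b, l·sin φ) dφ` -/
noncomputable def AB2 (l a b : ℝ) : ℝ :=
  ∫ φ in (0:ℝ)..π, min a (l * |Real.cos φ|) * min b (l * Real.sin φ)

/-- Intersection probability for the 2D Buffon–Laplace needle problem. -/
noncomputable def P2 (l a b : ℝ) : ℝ :=
  (b * A2 l a + a * B2 l b - AB2 l a b) / (π * a * b)

/-- Intersection probability for the 2D spherocylinder Buffon–Laplace problem. -/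
noncomputable def P2sc (l σ a b : ℝ) : ℝ :=
  ((b - σ) * A2 l (a - σ) + (a - σ) * B2 l (b - σ) - AB2 l (a - σ) (b - σ)
    + (σ * a + σ * b - σ ^ 2) * π) / (π * a * b)

/-- `A³ᴰ(l,a) = ∫_0^{π/2} ∫_0^π min(a, l·sin ψ·|cos φ|) dφ dψ` -/
noncomputable def A3 (l a : ℝ) : ℝ :=
  ∫ ψ in (0:ℝ)..(π/2), ∫ φ in (0:ℝ)..π, min a (l * Real.sin ψ * |Real.cos φ|)

/-- `B³ᴰ(l,b) = ∫_0^{π/2} ∫_0^π min(b, l·sin ψ·sin φ) dφ dψ` -/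
noncomputable def B3 (l b : ℝ) : ℝ :=
  ∫ ψ in (0:ℝ)..(π/2), ∫ φ in (0:ℝ)..π, min b (l * Real.sin ψ * Real.sin φ)

/-- `AB³ᴰ(l,a,b) = ∫_0^{π/2} ∫_0^π min(a, l·sin ψ·|cos φ|)·min(b, l·sin ψ·sin φ) dφ dψ` -/
noncomputable def AB3 (l a b : ℝ) : ℝ :=
  ∫ ψ in (0:ℝ)..(π/2), ∫ φ in (0:ℝ)..π,
    min a (l * Real.sin ψ * |Real.cos φ|) * min b (l * Real.sin ψ * Real.sin φ)

/-- `S³ᴰ(l,a,b) = b·A³ᴰ(l,a) + a·B³ᴰ(l,b) − AB³ᴰ(l,a,b)` -/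
noncomputable def S3 (l a b : ℝ) : ℝ := b * A3 l a + a * B3 l b - AB3 l a b

/-- `F(α,β,t) = ∫_α^β √(sin²ψ − t²) dψ` -/
noncomputable def Faux (α β t : ℝ) : ℝ :=
  ∫ ψ in α..β, Real.sqrt (Real.sin ψ ^ 2 - t ^ 2)

/-- `G(α,β,t) = ∫_α^β (π/2 − arcsin(t / sin ψ)) dψ` -/
noncomputable def Gaux (α β t : ℝ) : ℝ :=
  ∫ ψ in α..β, (π / 2 - Real.arcsin (t / Real.sin ψ))

/-! When `l ≤ b - σ ≤ a - σ`, the projections `l |cos φ|` and `l sin φ` never exceed `a - σ` and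
`b - σ`, so every `min` in `A`, `B` and `AB` is its second argument and the integrals are
elementary: `A = B = 2l` and `AB = l²`. -/

namespace Real

theorem integral_mul_abs_cos_zero_pi {f : ℝ → ℝ} (hf : Continuous f) :
    ∫ x in (0:ℝ)..π, f x * |cos x| =
      (∫ x in (0:ℝ)..π / 2, f x * cos x) - ∫ x in π / 2..π, f x * cos x := by
  have hπ := pi_pos
  have hint : ∀ u v : ℝ, IntervalIntegrable (fun x => f x * |cos x|) volume u v := fun u v =>
    (hf.mul (continuous_abs.comp continuous_cos)).intervalIntegrable u v
  rw [← intervalIntegral.integral_add_adjacent_intervals (hint 0 (π / 2)) (hint (π / 2) π),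
    sub_eq_add_neg, ← intervalIntegral.integral_neg]
  congr 1
  · refine intervalIntegral.integral_congr fun x hx => ?_
    rw [Set.uIcc_of_le (by positivity)] at hx
    rw [abs_of_nonneg (cos_nonneg_of_mem_Icc ⟨by linarith [hx.1], hx.2⟩)]
  · refine intervalIntegral.integral_congr fun x hx => ?_
    rw [Set.uIcc_of_le (by linarith)] at hx
    rw [abs_of_nonpos (cos_nonpos_of_pi_div_two_le_of_le hx.1 (by linarith [hx.2])), mul_neg]

theorem integral_abs_cos_zero_pi : ∫ x in (0:ℝ)..π, |cos x| = 2 := by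
  have h := integral_mul_abs_cos_zero_pi (f := fun _ => (1:ℝ)) continuous_const
  norm_num [integral_cos] at h
  linarith

theorem integral_sin_mul_abs_cos_zero_pi : ∫ x in (0:ℝ)..π, sin x * |cos x| = 1 := by
  rw [integral_mul_abs_cos_zero_pi continuous_sin, integral_sin_mul_cos₁, integral_sin_mul_cos₁]
  norm_num

end Real

theorem min_mul_abs_cos_eq_right {l c : ℝ} (hl : 0 ≤ l) (hc : l ≤ c) (x : ℝ) :
    min c (l * |cos x|) = l * |cos x| :=
  min_eq_right ((mul_le_of_le_one_right hl (abs_cos_le_one x)).trans hc)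

theorem min_mul_sin_eq_right {l c : ℝ} (hl : 0 ≤ l) (hc : l ≤ c) (x : ℝ) :
    min c (l * sin x) = l * sin x :=
  min_eq_right ((mul_le_of_le_one_right hl (sin_le_one x)).trans hc)

theorem A2_of_le {l c : ℝ} (hl : 0 ≤ l) (hc : l ≤ c) : A2 l c = 2 * l := by
  rw [A2, intervalIntegral.integral_congr fun x _ => min_mul_abs_cos_eq_right hl hc x,
    intervalIntegral.integral_const_mul, integral_abs_cos_zero_pi, mul_comm]

theorem B2_of_le {l c : ℝ} (hl : 0 ≤ l) (hc : l ≤ c) : B2 l c = 2 * l := by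
  rw [B2, intervalIntegral.integral_congr fun x _ => min_mul_sin_eq_right hl hc x,
    intervalIntegral.integral_const_mul, integral_sin, cos_zero, cos_pi]
  ring

theorem AB2_of_le {l c d : ℝ} (hl : 0 ≤ l) (hc : l ≤ c) (hd : l ≤ d) : AB2 l c d = l ^ 2 := by
  have hintegrand : ∀ x, min c (l * |cos x|) * min d (l * sin x) = l ^ 2 * (sin x * |cos x|) :=
    fun x => by rw [min_mul_abs_cos_eq_right hl hc, min_mul_sin_eq_right hl hd]; ring
  rw [AB2, intervalIntegral.integral_congr fun x _ => hintegrand x,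
    intervalIntegral.integral_const_mul, integral_sin_mul_abs_cos_zero_pi, mul_one]

theorem stmt9_general (l σ a b : ℝ) (hσ : 0 < σ) (hba : b ≤ a)
    (hl : 0 < l) (hlb : l ≤ b - σ) :
    P2sc l σ a b = 2 / π * ((b - σ) / b) * (l / a)
      + 2 / π * ((a - σ) / a) * (l / b)
      - 1 / π * (l ^ 2 / (a * b))
      + (σ / a + σ / b - σ ^ 2 / (a * b)) := by
  have hla : l ≤ a - σ := by linarith
  have hb : 0 < b := by linarith
  have ha : 0 < a := by linarith
  have hπ := pi_pos
  rw [P2sc, A2_of_le hl.le hla, B2_of_le hl.le hlb, AB2_of_le hl.le hla hlb]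
  field_simp
  ring

theorem stmt9 (l σ a b : ℝ) (hσ : 0 < σ) (hσb : σ < b) (hba : b ≤ a)
    (hl : 0 < l) (hlb : l ≤ b - σ) :
    P2sc l σ a b = 2 / π * ((b - σ) / b) * (l / a)
      + 2 / π * ((a - σ) / a) * (l / b)
      - 1 / π * (l ^ 2 / (a * b))
      + (σ / a + σ / b - σ ^ 2 / (a * b)) :=
  stmt9_general l σ a b hσ hba hl hlb
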